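/- Let R be the quotient of F₂⟨a,b,c⟩ by the relations (1+ab)c = 1, (1+ba)c = 0, (1+ba)ac = 1, and c(1+ab) + ac(1+ba) = 1. Then in R the elements c(1+ab) and ac(1+ba) are complementary idempotents: each is idempotent, their sum is 1, and their products in both orders are 0. -/
import Mathlib


section
local notation "a" => FreeAlgebra.ι (ZMod 2) (0 : Fin 3)
local notation "b" => FreeAlgebra.ι (ZMod 2) (1 : Fin 3)
local notation "c" => FreeAlgebra.ι (ZMod 2) (2 : Fin 3)

/-- The defining relations of the algebra `R`. -/
inductive RRel : FreeAlgebra (ZMod 2) (Fin 3) → FreeAlgebra (ZMod 2) (Fin 3) → Prop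
  | r1 : RRel ((1 + a * b) * c) 1
  | r2 : RRel ((1 + b * a) * c) 0
  | r3 : RRel ((1 + b * a) * (a * c)) 1
  | r4 : RRel (c * (1 + a * b) + a * c * (1 + b * a)) 1
end

noncomputable def A : RingQuot RRel :=
  RingQuot.mkAlgHom (ZMod 2) RRel (FreeAlgebra.ι (ZMod 2) 0)
noncomputable def B : RingQuot RRel :=
  RingQuot.mkAlgHom (ZMod 2) RRel (FreeAlgebra.ι (ZMod 2) 1)
noncomputable def C : RingQuot RRel :=
  RingQuot.mkAlgHom (ZMod 2) RRel (FreeAlgebra.ι (ZMod 2) 2)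

/-- In `R`, the elements `c(1+ab)` and `ac(1+ba)` are complementary
idempotents. -/
theorem complementary_idempotents :
    (C * (1 + A * B)) * (C * (1 + A * B)) = C * (1 + A * B) ∧
    (A * C * (1 + B * A)) * (A * C * (1 + B * A)) = A * C * (1 + B * A) ∧
    C * (1 + A * B) + A * C * (1 + B * A) = 1 ∧
    (C * (1 + A * B)) * (A * C * (1 + B * A)) = 0 ∧
    (A * C * (1 + B * A)) * (C * (1 + A * B)) = 0 := by
  have h2 : (1 + B * A) * C = 0 := by
    have h := RingQuot.mkAlgHom_rel (ZMod 2) RRel.r2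
    simpa [A, B, C, map_add, map_mul, map_one] using h
  have h4 : C * (1 + A * B) + A * C * (1 + B * A) = 1 := by
    have h := RingQuot.mkAlgHom_rel (ZMod 2) RRel.r4
    simpa [A, B, C, map_add, map_mul, map_one] using h
  have hef : (C * (1 + A * B)) * (A * C * (1 + B * A)) = 0 := by
    have key : (C * (1 + A * B)) * (A * C * (1 + B * A))
        = C * A * ((1 + B * A) * C) * (1 + B * A) := by noncomm_ring
    rw [key, h2, mul_zero, zero_mul]
  have hfe : (A * C * (1 + B * A)) * (C * (1 + A * B)) = 0 := by
    have key : (A * C * (1 + B * A)) * (C * (1 + A * B))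
        = A * C * ((1 + B * A) * C) * (1 + A * B) := by noncomm_ring
    rw [key, h2, mul_zero, zero_mul]
  have he : (C * (1 + A * B)) * (C * (1 + A * B)) = C * (1 + A * B) := by
    have : (C * (1 + A * B)) * (C * (1 + A * B) + A * C * (1 + B * A))
        = C * (1 + A * B) := by rw [h4, mul_one]
    rw [mul_add, hef, add_zero] at this
    exact this
  have hf : (A * C * (1 + B * A)) * (A * C * (1 + B * A)) = A * C * (1 + B * A) := by
    have : (A * C * (1 + B * A)) * (C * (1 + A * B) + A * C * (1 + B * A))
        = A * C * (1 + B * A) := by rw [h4, mul_one]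
    rw [mul_add, hfe, zero_add] at this
    exact this
  exact ⟨he, hf, h4, hef, hfe⟩
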